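/- The principle of explosion fails in all four forms of B-entailment: for distinct propositional variables α, β, each of ({α∧¬α} | ∅ ⊨ ∅ | {β}), (∅ | {α∧¬α} ⊨ {β} | ∅), (∅ | {α∧¬α} ⊨ ∅ | {β}), and ({α∧¬α} | ∅ ⊨ {β} | ∅) is invalid. -/

import Mathlib

/-- The four truth-values of Dunn-Belnap logic. -/
inductive Four where
  | f | bot | top | t
deriving DecidableEq, Repr

namespace Four

/-- Whether the value contains the classical value T. -/
def hasT : Four → Bool
  | t => true | top => true | _ => false

/-- Whether the value contains the classical value F. -/
def hasF : Four → Bool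
  | f => true | top => true | _ => false

/-- Build a value from its T-part and F-part. -/
def mk : Bool → Bool → Four
  | true, true => top
  | true, false => t
  | false, true => f
  | false, false => bot

/-- Logical order: x ≤_t y iff x∩{T} ⊆ y∩{T} and y∩{F} ⊆ x∩{F}. -/
def leT (x y : Four) : Prop :=
  (x.hasT = true → y.hasT = true) ∧ (y.hasF = true → x.hasF = true)

/-- Information order: x ≤_i y iff x ⊆ y. -/
def leI (x y : Four) : Prop :=
  (x.hasT = true → y.hasT = true) ∧ (x.hasF = true → y.hasF = true)

/-- Negation: swaps T and F membership. -/
def negT (x : Four) : Four := mk x.hasF x.hasT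

/-- Infimum w.r.t. the logical order. -/
def meetT (x y : Four) : Four := mk (x.hasT && y.hasT) (x.hasF || y.hasF)

/-- Supremum w.r.t. the logical order. -/
def joinT (x y : Four) : Four := mk (x.hasT || y.hasT) (x.hasF && y.hasF)

/-- Infimum w.r.t. the information order. -/
def meetI (x y : Four) : Four := mk (x.hasT && y.hasT) (x.hasF && y.hasF)

/-- Supremum w.r.t. the information order. -/
def joinI (x y : Four) : Four := mk (x.hasT || y.hasT) (x.hasF || y.hasF)

/-- Acceptance: designated set Y = {⊤, t}. -/
def acc (x : Four) : Prop := x = top ∨ x = t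

/-- Rejection: set N = {f, ⊤}. -/
def rej (x : Four) : Prop := x = f ∨ x = top

end Four

/-- Formulas of the language S: propositional variables, ¬, ∧, ∨. -/
inductive Form where
  | var : ℕ → Form
  | neg : Form → Form
  | conj : Form → Form → Form
  | disj : Form → Form → Form
deriving DecidableEq

/-- A valuation (agent) is determined by its values on variables; it is
extended homomorphically to all formulas. -/
def Form.eval (v : ℕ → Four) : Form → Four
  | var n => v n
  | neg φ => (φ.eval v).negT
  | conj φ ψ => (φ.eval v).meetT (ψ.eval v)
  | disj φ ψ => (φ.eval v).joinT (ψ.eval v)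

open Four Form

/-- Truth-preserving (Tarskian) entailment ⊨ᵗ = ⊨⁴. -/
def entT (Γ : Set Form) (α : Form) : Prop :=
  ¬ ∃ v : ℕ → Four, (∀ γ ∈ Γ, acc (γ.eval v)) ∧ ¬ acc (α.eval v)

/-- Falsity entailment ⊨ᶠ: no valuation not-rejects all premises while rejecting the conclusion. -/
def entF (Γ : Set Form) (α : Form) : Prop :=
  ¬ ∃ v : ℕ → Four, (∀ γ ∈ Γ, ¬ rej (γ.eval v)) ∧ rej (α.eval v)

/-- q-entailment: no valuation not-rejects all premises while not-accepting the conclusion. -/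
def entQ (Γ : Set Form) (α : Form) : Prop :=
  ¬ ∃ v : ℕ → Four, (∀ γ ∈ Γ, ¬ rej (γ.eval v)) ∧ ¬ acc (α.eval v)

/-- p-entailment: no valuation accepts all premises while rejecting the conclusion. -/
def entP (Γ : Set Form) (α : Form) : Prop :=
  ¬ ∃ v : ℕ → Four, (∀ γ ∈ Γ, acc (γ.eval v)) ∧ rej (α.eval v)

/-- B-entailment (Γ | Ψ ⊨ Φ | Δ): no valuation accepts all of Γ,
not-accepts all of Δ, rejects all of Φ and not-rejects all of Ψ. -/
def Bent (Γ Ψ Φ Δ : Set Form) : Prop :=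
  ¬ ∃ v : ℕ → Four,
    (∀ γ ∈ Γ, acc (γ.eval v)) ∧ (∀ δ ∈ Δ, ¬ acc (δ.eval v)) ∧
    (∀ φ ∈ Φ, rej (φ.eval v)) ∧ (∀ ψ ∈ Ψ, ¬ rej (ψ.eval v))

-- `x.hasT = x.hasF` singles out the glut `⊤` and the gap `⊥`.
theorem Four.meetT_negT_self_of_hasT_eq_hasF {x : Four} (hx : x.hasT = x.hasF) :
    x.meetT x.negT = x := by
  cases x <;> simp_all [meetT, negT, mk, hasT, hasF]

def contraVal (n : ℕ) (x : Four) : ℕ → Four := Function.update (fun _ => Four.f) n x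

theorem eval_conj_neg_var_contraVal (n : ℕ) {x : Four} (hx : x.hasT = x.hasF) :
    (conj (var n) (neg (var n))).eval (contraVal n x) = x := by
  simpa [Form.eval, contraVal] using Four.meetT_negT_self_of_hasT_eq_hasF hx

theorem eval_var_contraVal_of_ne {n m : ℕ} (x : Four) (h : m ≠ n) :
    (var m).eval (contraVal n x) = Four.f := by
  simp [Form.eval, contraVal, h]

-- A glut `⊤` for `α` makes `α ∧ ¬α` accepted, a gap `⊥` makes it not rejected; `β` stays `f`.
/-- the principle of explosion fails in all four forms of
B-entailment, for distinct propositional variables α, β. -/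
theorem explosion_fails (n m : ℕ) (h : n ≠ m) :
    ¬ Bent {Form.conj (Form.var n) (Form.neg (Form.var n))} ∅ ∅ {Form.var m} ∧
    ¬ Bent ∅ {Form.conj (Form.var n) (Form.neg (Form.var n))} {Form.var m} ∅ ∧
    ¬ Bent ∅ {Form.conj (Form.var n) (Form.neg (Form.var n))} ∅ {Form.var m} ∧
    ¬ Bent {Form.conj (Form.var n) (Form.neg (Form.var n))} ∅ {Form.var m} ∅ := by
  have hglut := eval_conj_neg_var_contraVal n (x := top) rfl
  have hgap := eval_conj_neg_var_contraVal n (x := bot) rfl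
  have hβ := fun x => eval_var_contraVal_of_ne x h.symm
  refine ⟨not_not_intro ⟨contraVal n top, ?_⟩, not_not_intro ⟨contraVal n bot, ?_⟩,
    not_not_intro ⟨contraVal n bot, ?_⟩, not_not_intro ⟨contraVal n top, ?_⟩⟩ <;>
    simp [acc, rej, hglut, hgap, hβ]
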